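/- Let θ > 0, let (δ_n) ⊂ (0,1) with δ_n → 0, and let (r_n) ⊂ ℝ with r_n → r. Then: (i) if |r| < 1, φ_{δ_n}(r_n) → φ(r) = (θ/2)·log((1+r)/(1−r)); (ii) if r ≥ 1, φ_{δ_n}(r_n) → +∞; (iii) if r ≤ −1, φ_{δ_n}(r_n) → −∞. -/

import Mathlib

open Real Set Filter Topology

/-- The regularized logarithmic potential `F_δ^log` at temperature `θ`. -/
noncomputable def Flogδ (θ δ : ℝ) (r : ℝ) : ℝ :=
  if 1 - δ ≤ r then
    (θ/2) * ((1-r) * Real.log δ + (1+r) * Real.log (2-δ)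
      + (1-r)^2/(2*δ) + (1+r)^2/(2*(2-δ)) - 1)
  else if r ≤ -(1-δ) then
    (θ/2) * ((1+r) * Real.log δ + (1-r) * Real.log (2-δ)
      + (1+r)^2/(2*δ) + (1-r)^2/(2*(2-δ)) - 1)
  else
    (θ/2) * ((1+r) * Real.log (1+r) + (1-r) * Real.log (1-r))


/-! On `(-(1 - δ), 1 - δ)` the regularized potential is `F^log`, and on `[1 - δ, ∞)` it is the
second-order Taylor polynomial of `F^log` at `1 - δ`, so the one-sided derivatives agree at the
junction. For `|r| < 1` the points `r_n` eventually lie in the middle region, where the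
derivative is `φ`, and (i) is continuity of `φ`. The potential is even, so its derivative is odd
and (iii) follows from (ii). For (ii), both branches bound the derivative at `r ≥ 0` from below
by `(θ/2)·(-log (max δ (1 - r)) - 1)`, and `max δ_n (1 - r_n) → 0⁺`. -/

theorem hasDerivAt_of_hasDerivWithinAt_Iic_Ici {F : Type*} [NormedAddCommGroup F]
    [NormedSpace ℝ F] {f : ℝ → F} {f' : F} {a : ℝ}
    (hl : HasDerivWithinAt f f' (Iic a) a) (hr : HasDerivWithinAt f f' (Ici a) a) :
    HasDerivAt f f' a := by
  simpa only [Iic_union_Ici, hasDerivWithinAt_univ] using hl.union hr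

noncomputable def Flog (θ r : ℝ) : ℝ :=
  (θ/2) * ((1+r) * Real.log (1+r) + (1-r) * Real.log (1-r))

/-- The second-order Taylor polynomial of `Flog θ` at `1 - δ`. -/
noncomputable def FlogδUpper (θ δ r : ℝ) : ℝ :=
  (θ/2) * ((1-r) * Real.log δ + (1+r) * Real.log (2-δ)
    + (1-r)^2/(2*δ) + (1+r)^2/(2*(2-δ)) - 1)

noncomputable def phi (θ r : ℝ) : ℝ := (θ/2) * Real.log ((1+r)/(1-r))

noncomputable def phiδUpper (θ δ r : ℝ) : ℝ :=
  (θ/2) * (Real.log (2-δ) - Real.log δ - (1-r)/δ + (1+r)/(2-δ))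

section
variable (θ : ℝ) {δ r : ℝ}

theorem Flogδ_of_le (h : 1 - δ ≤ r) : Flogδ θ δ r = FlogδUpper θ δ r := by
  rw [Flogδ, if_pos h, FlogδUpper]

theorem Flogδ_neg (hδ : δ < 1) : Flogδ θ δ (-r) = Flogδ θ δ r := by
  unfold Flogδ
  split_ifs <;>
    first | ring1 | (exfalso; linarith) | (rw [← sub_eq_add_neg, sub_neg_eq_add]; ring)

theorem deriv_Flogδ_neg (hδ : δ < 1) :
    deriv (Flogδ θ δ) (-r) = -deriv (Flogδ θ δ) r := by
  rw [← neg_neg (deriv (Flogδ θ δ) (-r)), ← deriv_comp_neg]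
  simp only [Flogδ_neg θ hδ]

theorem FlogδUpper_one_sub :
    FlogδUpper θ δ (1 - δ) = Flog θ (1 - δ) := by
  rw [FlogδUpper, Flog, show (1:ℝ) - (1 - δ) = δ by ring, show (1:ℝ) + (1 - δ) = 2 - δ by ring]
  field_simp
  ring

theorem phiδUpper_one_sub (h₀ : δ ≠ 0) (h₂ : 2 - δ ≠ 0) :
    phiδUpper θ δ (1 - δ) = phi θ (1 - δ) := by
  rw [phiδUpper, phi, show (1:ℝ) - (1 - δ) = δ by ring, show (1:ℝ) + (1 - δ) = 2 - δ by ring,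
    Real.log_div h₂ h₀, div_self h₀, div_self h₂]
  ring

theorem hasDerivAt_Flog (h : |r| < 1) : HasDerivAt (Flog θ) (phi θ r) r := by
  obtain ⟨h₁, h₂⟩ := abs_lt.mp h
  have hp : 0 < 1 + r := by linarith
  have hm : 0 < 1 - r := by linarith
  have ha : HasDerivAt (fun x : ℝ => 1 + x) 1 r := (hasDerivAt_id r).const_add 1
  have hb : HasDerivAt (fun x : ℝ => 1 - x) (-1) r := (hasDerivAt_id r).const_sub 1
  have H := ((ha.mul (ha.log hp.ne')).add (hb.mul (hb.log hm.ne'))).const_mul (θ/2)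
  refine H.congr_deriv ?_
  rw [phi, Real.log_div hp.ne' hm.ne']
  field_simp
  ring

theorem hasDerivAt_FlogδUpper (h₀ : δ ≠ 0) (h₂ : 2 - δ ≠ 0) :
    HasDerivAt (FlogδUpper θ δ) (phiδUpper θ δ r) r := by
  have ha : HasDerivAt (fun x : ℝ => 1 + x) 1 r := (hasDerivAt_id r).const_add 1
  have hb : HasDerivAt (fun x : ℝ => 1 - x) (-1) r := (hasDerivAt_id r).const_sub 1
  have H := (((((hb.mul_const (Real.log δ)).add (ha.mul_const (Real.log (2-δ)))).add
      ((hb.pow 2).div_const (2*δ))).add ((ha.pow 2).div_const (2*(2-δ)))).sub_const 1).const_mul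
      (θ/2)
  refine H.congr_deriv ?_
  rw [phiδUpper]
  field_simp
  ring

theorem Flogδ_of_mem_Ioc (h : r ∈ Ioc (-(1 - δ)) (1 - δ)) : Flogδ θ δ r = Flog θ r := by
  obtain ⟨h₁, h₂⟩ := h
  rcases h₂.lt_or_eq with h₂ | rfl
  · rw [Flogδ, if_neg h₂.not_ge, if_neg h₁.not_ge, Flog]
  · rw [Flogδ_of_le θ le_rfl, FlogδUpper_one_sub]

theorem hasDerivAt_Flogδ_of_abs_lt (hδ : 0 ≤ δ) (h : |r| < 1 - δ) :
    HasDerivAt (Flogδ θ δ) (phi θ r) r := by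
  obtain ⟨h₁, h₂⟩ := abs_lt.mp h
  have hev : Flogδ θ δ =ᶠ[𝓝 r] Flog θ := by
    filter_upwards [Ioo_mem_nhds h₁ h₂] with x hx
    exact Flogδ_of_mem_Ioc θ (Ioo_subset_Ioc_self hx)
  exact (hasDerivAt_Flog θ (by linarith)).congr_of_eventuallyEq hev

theorem hasDerivAt_Flogδ_of_le (hδ : δ ∈ Ioo 0 1) (h : 1 - δ ≤ r) :
    HasDerivAt (Flogδ θ δ) (phiδUpper θ δ r) r := by
  obtain ⟨h₀, h₁⟩ := hδ
  have hUpper := hasDerivAt_FlogδUpper θ (r := r) h₀.ne' (by linarith)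
  rcases h.lt_or_eq with h | rfl
  · refine hUpper.congr_of_eventuallyEq ?_
    filter_upwards [Ici_mem_nhds h] with x hx
    exact Flogδ_of_le θ hx
  · refine hasDerivAt_of_hasDerivWithinAt_Iic_Ici ?_
      (hUpper.hasDerivWithinAt.congr (fun x hx => Flogδ_of_le θ hx) (Flogδ_of_le θ le_rfl))
    rw [phiδUpper_one_sub θ h₀.ne' (by linarith)]
    have hev : Flogδ θ δ =ᶠ[𝓝[≤] (1 - δ)] Flog θ := by
      filter_upwards [Ioc_mem_nhdsLE (by linarith : -(1 - δ) < 1 - δ)] with x hx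
      exact Flogδ_of_mem_Ioc θ hx
    exact (hasDerivAt_Flog θ (abs_lt.mpr ⟨by linarith, by linarith⟩)).hasDerivWithinAt
      |>.congr_of_eventuallyEq hev (Flogδ_of_mem_Ioc θ ⟨by linarith, le_rfl⟩)

end

theorem le_deriv_Flogδ_of_nonneg {θ δ r : ℝ} (hθ : 0 < θ) (hδ : δ ∈ Ioo 0 1) (hr : 0 ≤ r) :
    θ/2 * (-Real.log (max δ (1 - r)) - 1) ≤ deriv (Flogδ θ δ) r := by
  obtain ⟨h₀, h₁⟩ := hδ
  rcases lt_or_ge r (1 - δ) with h | h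
  · have habs : |r| < 1 - δ := abs_lt.mpr ⟨by linarith, h⟩
    rw [(hasDerivAt_Flogδ_of_abs_lt θ h₀.le habs).deriv, phi,
      Real.log_div (by linarith) (by linarith)]
    have : Real.log (1 - r) ≤ Real.log (max δ (1 - r)) :=
      Real.log_le_log (by linarith) (le_max_right _ _)
    have : 0 ≤ Real.log (1 + r) := Real.log_nonneg (by linarith)
    exact mul_le_mul_of_nonneg_left (by linarith) (by positivity)
  · rw [(hasDerivAt_Flogδ_of_le θ ⟨h₀, h₁⟩ h).deriv, phiδUpper]
    have : Real.log δ ≤ Real.log (max δ (1 - r)) := Real.log_le_log h₀ (le_max_left _ _)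
    have : 0 ≤ Real.log (2 - δ) := Real.log_nonneg (by linarith)
    have : (1 - r) / δ ≤ 1 := div_le_one_of_le₀ (by linarith) h₀.le
    have : 0 ≤ (1 + r) / (2 - δ) := div_nonneg (by linarith) (by linarith)
    exact mul_le_mul_of_nonneg_left (by linarith) (by positivity)

section
variable {ι : Type*} {l : Filter ι} {θ : ℝ} {δ r : ι → ℝ} {rlim : ℝ}

theorem tendsto_deriv_Flogδ_phi (hδ : ∀ᶠ i in l, 0 ≤ δ i) (hδ0 : Tendsto δ l (𝓝 0))
    (hr : Tendsto r l (𝓝 rlim)) (habs : |rlim| < 1) :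
    Tendsto (fun i => deriv (Flogδ θ (δ i)) (r i)) l (𝓝 (phi θ rlim)) := by
  obtain ⟨h₁, h₂⟩ := abs_lt.mp habs
  have hm : 1 - rlim ≠ 0 := by linarith
  have hq : (1 + rlim) / (1 - rlim) ≠ 0 := (div_pos (by linarith) (by linarith)).ne'
  have hcont : ContinuousAt (phi θ) rlim := by
    unfold phi
    fun_prop (disch := assumption)
  have hev : ∀ᶠ i in l, |r i| < 1 - δ i :=
    hr.abs.eventually_lt (tendsto_const_nhds.sub hδ0) (by simpa using habs)
  refine (hcont.tendsto.comp hr).congr' ?_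
  filter_upwards [hδ, hev] with i hi hri
  exact (hasDerivAt_Flogδ_of_abs_lt θ hi hri).deriv.symm

theorem tendsto_deriv_Flogδ_atTop (hθ : 0 < θ) (hδ : ∀ᶠ i in l, δ i ∈ Ioo 0 1)
    (hδ0 : Tendsto δ l (𝓝 0)) (hr : Tendsto r l (𝓝 rlim)) (h1 : 1 ≤ rlim) :
    Tendsto (fun i => deriv (Flogδ θ (δ i)) (r i)) l atTop := by
  have hmax : Tendsto (fun i => max (δ i) (1 - r i)) l (𝓝[>] 0) := by
    refine tendsto_nhdsWithin_iff.mpr ⟨?_, hδ.mono fun i hi => lt_max_of_lt_left hi.1⟩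
    have h1r : Tendsto (fun i => 1 - r i) l (𝓝 (1 - rlim)) := tendsto_const_nhds.sub hr
    simpa [max_eq_left (by linarith : 1 - rlim ≤ 0)] using hδ0.max h1r
  have hbound : Tendsto (fun i => θ/2 * (-Real.log (max (δ i) (1 - r i)) - 1)) l atTop := by
    refine Tendsto.const_mul_atTop (by positivity) ?_
    simpa only [sub_eq_add_neg, Function.comp_def] using tendsto_atTop_add_const_right _ (-1)
      (tendsto_neg_atBot_atTop.comp (Real.tendsto_log_nhdsGT_zero.comp hmax))
  refine tendsto_atTop_mono' l ?_ hbound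
  filter_upwards [hδ, hr.eventually (lt_mem_nhds (by linarith : (0:ℝ) < rlim))] with i hi hri
  exact le_deriv_Flogδ_of_nonneg hθ hi hri.le

theorem tendsto_deriv_Flogδ_atBot (hθ : 0 < θ) (hδ : ∀ᶠ i in l, δ i ∈ Ioo 0 1)
    (hδ0 : Tendsto δ l (𝓝 0)) (hr : Tendsto r l (𝓝 rlim)) (h1 : rlim ≤ -1) :
    Tendsto (fun i => deriv (Flogδ θ (δ i)) (r i)) l atBot := by
  have H := tendsto_deriv_Flogδ_atTop hθ hδ hδ0 hr.neg (by linarith)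
  refine (tendsto_neg_atTop_atBot.comp H).congr' ?_
  filter_upwards [hδ] with i hi
  simp only [Function.comp_apply, deriv_Flogδ_neg θ hi.2, neg_neg]

end

/-- Pointwise limit of `φ_{δ_n}(r_n)` as `δ_n → 0` and `r_n → r`: it converges to
`φ(r) = (θ/2)·log((1+r)/(1−r))` if `|r| < 1`, to `+∞` if `r ≥ 1`, and to `−∞` if
`r ≤ −1`. -/
theorem Flogδ_deriv_limit
    (θ : ℝ) (hθ : 0 < θ)
    (δ : ℕ → ℝ) (hδ : ∀ n, δ n ∈ Set.Ioo (0:ℝ) 1)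
    (hδ0 : Tendsto δ atTop (𝓝 0))
    (r : ℕ → ℝ) (rlim : ℝ) (hr : Tendsto r atTop (𝓝 rlim)) :
    (|rlim| < 1 →
      Tendsto (fun n => deriv (Flogδ θ (δ n)) (r n)) atTop
        (𝓝 ((θ/2) * Real.log ((1 + rlim)/(1 - rlim))))) ∧
    (1 ≤ rlim → Tendsto (fun n => deriv (Flogδ θ (δ n)) (r n)) atTop atTop) ∧
    (rlim ≤ -1 → Tendsto (fun n => deriv (Flogδ θ (δ n)) (r n)) atTop atBot) := by
  have hδ' : ∀ᶠ n in atTop, δ n ∈ Ioo 0 1 := Eventually.of_forall hδ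
  exact ⟨tendsto_deriv_Flogδ_phi (hδ'.mono fun _ hn => hn.1.le) hδ0 hr,
    tendsto_deriv_Flogδ_atTop hθ hδ' hδ0 hr, tendsto_deriv_Flogδ_atBot hθ hδ' hδ0 hr⟩
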